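/- arXiv:2510.19525 — 3 statements merged into one kernel-verified Lean document; each statement's English description precedes it below -/
import Mathlib

section
/- The summatory divisor function satisfies the Dirichlet asymptotic: the function N ↦ (∑_{n=1}^{N} σ₀(n)) − (N·ln N + (2γ − 1)·N) is O(√N) as N → ∞, where γ is the Euler–Mascheroni constant. In particular the average number of divisors of integers up to N is asymptotically ln N + 2γ − 1. -/
open Filter Asymptotics Finset


lemma sum_divisors_eq (N : ℕ) :
    ∑ n ∈ Icc 1 N, (n.divisors.card) = ∑ k ∈ Icc 1 N, N / k := by
  have h1 : ∀ n ∈ Icc 1 N, n.divisors.card = ((Icc 1 N).filter (· ∣ n)).card := by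
    intro n hn
    rw [mem_Icc] at hn
    congr 1
    ext k
    simp only [Nat.mem_divisors, mem_filter, mem_Icc]
    constructor
    · rintro ⟨hk, hn0⟩
      exact ⟨⟨Nat.one_le_iff_ne_zero.2 (fun h => by simp [h] at hk; omega),
        (Nat.le_of_dvd (by omega) hk).trans hn.2⟩, hk⟩
    · rintro ⟨-, hk⟩
      exact ⟨hk, by omega⟩
  rw [Finset.sum_congr rfl h1]
  simp_rw [Finset.card_filter]
  rw [Finset.sum_comm]
  refine Finset.sum_congr rfl fun k hk => ?_
  rw [← Finset.card_filter]
  have : Icc 1 N = Ioc 0 N := rfl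
  rw [this, ← Nat.Ioc_filter_dvd_card_eq_div N k]

lemma hyperbola (N : ℕ) (hN : 1 ≤ N) :
    ∑ k ∈ Icc 1 N, N / k + N.sqrt * N.sqrt = 2 * ∑ k ∈ Icc 1 N.sqrt, N / k := by
  set K := N.sqrt with hK
  have hKsq : K * K ≤ N := by have := Nat.sqrt_le' N; rwa [pow_two] at this
  have hKsq' : N < (K + 1) * (K + 1) := by
    have := Nat.lt_succ_sqrt' N; rwa [Nat.succ_eq_add_one, pow_two] at this
  have hKN : K ≤ N := Nat.sqrt_le_self N
  have hK1 : 1 ≤ K := Nat.one_le_iff_ne_zero.2 (by simpa [hK, Nat.sqrt_eq_zero] using by omega)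
  have hKle : ∀ m ∈ Icc 1 K, K ≤ N / m := by
    intro m hm
    rw [mem_Icc] at hm
    calc K ≤ N / K := (Nat.le_div_iff_mul_le (by omega)).2 hKsq
    _ ≤ N / m := Nat.div_le_div_left hm.2 (by omega)
  have tail : ∑ k ∈ Ioc K N, N / k = ∑ m ∈ Icc 1 K, (N / m - K) := by
    have step1 : ∀ k ∈ Ioc K N, N / k = ((Icc 1 K).filter (fun m => k * m ≤ N)).card := by
      intro k hk
      rw [mem_Ioc] at hk
      have hk0 : 0 < k := by omega
      have hdk : N / k ≤ K := by
        have : N / k < K + 1 := by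
          rw [Nat.div_lt_iff_lt_mul hk0]
          calc N < (K + 1) * (K + 1) := hKsq'
          _ ≤ (K + 1) * k := by nlinarith [hk.1]
        omega
      have heq : (Icc 1 K).filter (fun m => k * m ≤ N) = Icc 1 (N / k) := by
        ext m
        simp only [mem_filter, mem_Icc]
        constructor
        · rintro ⟨⟨h1, h2⟩, h3⟩
          refine ⟨h1, (Nat.le_div_iff_mul_le hk0).2 ?_⟩
          rw [Nat.mul_comm]; exact h3
        · rintro ⟨h1, h2⟩
          refine ⟨⟨h1, h2.trans hdk⟩, ?_⟩
          rw [Nat.mul_comm]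
          exact (Nat.le_div_iff_mul_le hk0).1 h2
      rw [heq, Nat.card_Icc, Nat.add_sub_cancel]
    rw [Finset.sum_congr rfl step1]
    simp_rw [Finset.card_filter]
    rw [Finset.sum_comm]
    refine Finset.sum_congr rfl fun m hm => ?_
    rw [mem_Icc] at hm
    have hm0 : 0 < m := hm.1
    rw [← Finset.card_filter]
    have heq2 : (Ioc K N).filter (fun k => k * m ≤ N) = Ioc K (N / m) := by
      ext k
      simp only [mem_filter, mem_Ioc]
      constructor
      · rintro ⟨⟨h1, h2⟩, h3⟩
        exact ⟨h1, (Nat.le_div_iff_mul_le hm0).2 h3⟩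
      · rintro ⟨h1, h2⟩
        refine ⟨⟨h1, h2.trans (Nat.div_le_self _ _)⟩, (Nat.le_div_iff_mul_le hm0).1 h2⟩
    rw [heq2, Nat.card_Ioc]
  have split : Icc 1 N = Icc 1 K ∪ Ioc K N := by
    have e1 : Icc 1 N = Ioc 0 N := rfl
    have e2 : Icc 1 K = Ioc 0 K := rfl
    rw [e1, e2, Finset.Ioc_union_Ioc_eq_Ioc (Nat.zero_le K) hKN]
  rw [split, Finset.sum_union, tail]
  · have hconst : K * K = ∑ _m ∈ Icc 1 K, K := by
      rw [Finset.sum_const, Nat.card_Icc]; simp [Nat.mul_comm]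
    have key : ∑ m ∈ Icc 1 K, (N / m - K) + K * K = ∑ m ∈ Icc 1 K, N / m := by
      rw [hconst, ← Finset.sum_add_distrib]
      exact Finset.sum_congr rfl fun m hm => Nat.sub_add_cancel (hKle m hm)
    omega
  · rw [Finset.disjoint_left]
    intro a ha hb
    rw [mem_Icc] at ha; rw [mem_Ioc] at hb; omega
set_option maxHeartbeats 1000000

lemma analytic (N : ℕ) (hN : 4 ≤ N) :
    |2 * (∑ k ∈ Icc 1 N.sqrt, ((N / k : ℕ) : ℝ)) - (N.sqrt : ℝ) ^ 2 -
      ((N : ℝ) * Real.log N + (2 * Real.eulerMascheroniConstant - 1) * N)| ≤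
      15 * Real.sqrt N := by
  set K := N.sqrt with hKdef
  have hKsq : K * K ≤ N := by have := Nat.sqrt_le' N; rwa [pow_two] at this
  have hKsq' : N < (K + 1) * (K + 1) := by
    have := Nat.lt_succ_sqrt' N; rwa [Nat.succ_eq_add_one, pow_two] at this
  have hK2 : 2 ≤ K := by
    by_contra h
    push_neg at h
    interval_cases K <;> omega
  clear_value K
  have hNr4 : (4 : ℝ) ≤ (N : ℝ) := by exact_mod_cast hN
  have hNr0 : (0 : ℝ) < (N : ℝ) := by linarith
  have hKr2 : (2 : ℝ) ≤ (K : ℝ) := by exact_mod_cast hK2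
  have hKr0 : (0 : ℝ) < (K : ℝ) := by linarith
  have hKsqR : (K : ℝ) * (K : ℝ) ≤ (N : ℝ) := by exact_mod_cast hKsq
  have hKsqR' : (N : ℝ) < ((K : ℝ) + 1) * ((K : ℝ) + 1) := by exact_mod_cast hKsq'
  set s : ℝ := Real.sqrt N with hs
  have hs2 : (2 : ℝ) ≤ s := by
    rw [hs, show (2:ℝ) = Real.sqrt 4 by
      rw [show (4:ℝ) = 2^2 by norm_num, Real.sqrt_sq]; norm_num]
    exact Real.sqrt_le_sqrt hNr4
  have hss : s * s = (N : ℝ) := Real.mul_self_sqrt hNr0.le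
  have hKs : (K : ℝ) ≤ s := by
    rw [hs]
    exact (Real.le_sqrt hKr0.le hNr0.le).2 (by nlinarith)
  have hsK1 : s < (K : ℝ) + 1 := by
    rw [hs]
    exact (Real.sqrt_lt' (by linarith)).2 (by nlinarith)
  have hNK : (N : ℝ) / (K : ℝ) ≤ 2 * s := by
    rw [div_le_iff₀ hKr0]
    nlinarith
  -- harmonic sum
  set H : ℝ := (harmonic K : ℝ) with hH
  have hHsum : ∑ k ∈ Icc 1 K, ((N : ℝ) / (k : ℝ)) = (N : ℝ) * H := by
    rw [hH, harmonic_eq_sum_Icc]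
    push_cast
    rw [Finset.mul_sum]
    exact Finset.sum_congr rfl fun k _ => (div_eq_mul_inv _ _)
  set γ : ℝ := Real.eulerMascheroniConstant with hγ
  have hg1 : γ < H - Real.log K := by
    have := Real.eulerMascheroniConstant_lt_eulerMascheroniSeq' K
    rwa [Real.eulerMascheroniSeq', if_neg (by omega)] at this
  have hg2 : H - Real.log ((K : ℝ) + 1) < γ := by
    have := Real.eulerMascheroniSeq_lt_eulerMascheroniConstant K
    rwa [Real.eulerMascheroniSeq] at this
  have hlog1 : Real.log ((K : ℝ) + 1) - Real.log K ≤ 1 / (K : ℝ) := by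
    rw [← Real.log_div (by linarith) (by linarith)]
    have := Real.log_le_sub_one_of_pos (show (0:ℝ) < ((K:ℝ)+1)/(K:ℝ) by positivity)
    have heq : ((K : ℝ) + 1) / (K : ℝ) - 1 = 1 / (K : ℝ) := by field_simp; ring
    linarith
  have hgam : |H - Real.log K - γ| ≤ 1 / (K : ℝ) := by
    rw [abs_le]
    constructor
    · linarith
    · have hmono : Real.log K ≤ Real.log ((K : ℝ) + 1) :=
        Real.log_le_log (by linarith) (by linarith)
      linarith
  have hlog2a : 0 ≤ Real.log N - 2 * Real.log K := by
    have h2log : 2 * Real.log (K : ℝ) = Real.log ((K : ℝ) * (K : ℝ)) := by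
      rw [Real.log_mul (by linarith) (by linarith)]; ring
    rw [h2log]
    have := Real.log_le_log (by positivity) hKsqR
    linarith
  have hlog2b : Real.log N - 2 * Real.log K ≤ 3 / (K : ℝ) := by
    have h2log : 2 * Real.log (K : ℝ) = Real.log ((K : ℝ) * (K : ℝ)) := by
      rw [Real.log_mul (by linarith) (by linarith)]; ring
    rw [h2log, ← Real.log_div (by linarith) (by positivity)]
    have := Real.log_le_sub_one_of_pos
      (show (0:ℝ) < (N : ℝ) / ((K : ℝ) * (K : ℝ)) by positivity)
    have hb : (N : ℝ) / ((K : ℝ) * (K : ℝ)) - 1 ≤ 3 / (K : ℝ) := by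
      rw [div_sub_one (by positivity), div_le_div_iff₀ (by positivity) hKr0]
      nlinarith
    linarith
  -- floor errors
  have hfloor : |(∑ k ∈ Icc 1 K, ((N / k : ℕ) : ℝ)) - (N : ℝ) * H| ≤ (K : ℝ) := by
    rw [← hHsum, ← Finset.sum_sub_distrib]
    calc |∑ k ∈ Icc 1 K, (((N / k : ℕ) : ℝ) - (N : ℝ) / (k : ℝ))|
        ≤ ∑ k ∈ Icc 1 K, |((N / k : ℕ) : ℝ) - (N : ℝ) / (k : ℝ)| :=
          Finset.abs_sum_le_sum_abs _ _
      _ ≤ ∑ _k ∈ Icc 1 K, (1 : ℝ) := by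
          refine Finset.sum_le_sum fun k hk => ?_
          rw [mem_Icc] at hk
          have hk0 : (0 : ℝ) < (k : ℝ) := by exact_mod_cast hk.1
          have h1 : ((N / k : ℕ) : ℝ) ≤ (N : ℝ) / (k : ℝ) := Nat.cast_div_le
          have hnat : N < (N / k + 1) * k := by
            have hd := Nat.div_add_mod N k
            have hm := Nat.mod_lt N (show 0 < k by omega)
            nlinarith
          have h2 : (N : ℝ) / (k : ℝ) ≤ ((N / k : ℕ) : ℝ) + 1 := by
            rw [div_le_iff₀ hk0]
            have : (N : ℝ) < (((N / k : ℕ) : ℝ) + 1) * (k : ℝ) := by exact_mod_cast hnat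
            linarith
          rw [abs_le]
          constructor <;> linarith
      _ = (K : ℝ) := by rw [Finset.sum_const, Nat.card_Icc]; simp
  set S : ℝ := ∑ k ∈ Icc 1 K, ((N / k : ℕ) : ℝ) with hS
  have decomp : 2 * S - (K : ℝ) ^ 2 - ((N : ℝ) * Real.log N + (2 * γ - 1) * N) =
      2 * (S - (N : ℝ) * H) + 2 * (N : ℝ) * (H - Real.log K - γ) -
        (N : ℝ) * (Real.log N - 2 * Real.log K) + ((N : ℝ) - (K : ℝ) ^ 2) := by ring
  rw [decomp]
  have b1 : |2 * (S - (N : ℝ) * H)| ≤ 2 * s := by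
    rw [abs_mul, abs_two]
    nlinarith [abs_nonneg (S - (N : ℝ) * H)]
  have b2 : |2 * (N : ℝ) * (H - Real.log K - γ)| ≤ 4 * s := by
    rw [abs_mul]
    rw [abs_of_pos (show (0:ℝ) < 2 * (N : ℝ) by linarith)]
    calc 2 * (N : ℝ) * |H - Real.log K - γ| ≤ 2 * (N : ℝ) * (1 / (K : ℝ)) := by
          apply mul_le_mul_of_nonneg_left hgam (by linarith)
      _ = 2 * ((N : ℝ) / (K : ℝ)) := by ring
      _ ≤ 2 * (2 * s) := by linarith
      _ = 4 * s := by ring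
  have b3 : |(N : ℝ) * (Real.log N - 2 * Real.log K)| ≤ 6 * s := by
    rw [abs_mul, abs_of_pos hNr0, abs_of_nonneg hlog2a]
    calc (N : ℝ) * (Real.log N - 2 * Real.log K) ≤ (N : ℝ) * (3 / (K : ℝ)) := by
          apply mul_le_mul_of_nonneg_left hlog2b hNr0.le
      _ = 3 * ((N : ℝ) / (K : ℝ)) := by ring
      _ ≤ 3 * (2 * s) := by linarith
      _ = 6 * s := by ring
  have b4 : |(N : ℝ) - (K : ℝ) ^ 2| ≤ 3 * s := by
    rw [abs_of_nonneg (by nlinarith)]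
    nlinarith
  calc |2 * (S - (N : ℝ) * H) + 2 * (N : ℝ) * (H - Real.log K - γ) -
        (N : ℝ) * (Real.log N - 2 * Real.log K) + ((N : ℝ) - (K : ℝ) ^ 2)|
      ≤ |2 * (S - (N : ℝ) * H)| + |2 * (N : ℝ) * (H - Real.log K - γ)| +
        |(N : ℝ) * (Real.log N - 2 * Real.log K)| + |(N : ℝ) - (K : ℝ) ^ 2| := by
        have h3 := abs_add_le (2 * (S - (N : ℝ) * H)) (2 * (N : ℝ) * (H - Real.log K - γ))
        have h2 := abs_sub (2 * (S - (N : ℝ) * H) + 2 * (N : ℝ) * (H - Real.log K - γ))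
          ((N : ℝ) * (Real.log N - 2 * Real.log K))
        have h1 := abs_add_le (2 * (S - (N : ℝ) * H) + 2 * (N : ℝ) * (H - Real.log K - γ) -
          (N : ℝ) * (Real.log N - 2 * Real.log K)) ((N : ℝ) - (K : ℝ) ^ 2)
        linarith
    _ ≤ 2 * s + 4 * s + 6 * s + 3 * s := by linarith
    _ = 15 * s := by ring


/-- Dirichlet's divisor asymptotic: `∑_{n=1}^{N} σ₀(n) = N·ln N + (2γ − 1)·N + O(√N)`,
where `γ` is the Euler–Mascheroni constant. In particular the average number of divisors
of the integers up to `N` is asymptotically `ln N + 2γ − 1`. -/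
theorem dirichlet_divisor_asymptotic :
    (fun N : ℕ =>
        (∑ n ∈ Finset.Icc 1 N, (n.divisors.card : ℝ)) -
          ((N : ℝ) * Real.log N + (2 * Real.eulerMascheroniConstant - 1) * N))
      =O[atTop] fun N : ℕ => Real.sqrt N := by
  rw [Asymptotics.isBigO_iff]
  refine ⟨15, ?_⟩
  filter_upwards [Filter.eventually_ge_atTop 4] with N hN
  have h1 := sum_divisors_eq N
  have h2 := hyperbola N (by omega)
  have hD : (∑ n ∈ Finset.Icc 1 N, (n.divisors.card : ℝ)) =
      2 * (∑ k ∈ Finset.Icc 1 N.sqrt, ((N / k : ℕ) : ℝ)) - (N.sqrt : ℝ) ^ 2 := by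
    have hcast : ((∑ n ∈ Finset.Icc 1 N, n.divisors.card : ℕ) : ℝ) +
        (N.sqrt : ℝ) * (N.sqrt : ℝ) =
        2 * ((∑ k ∈ Finset.Icc 1 N.sqrt, N / k : ℕ) : ℝ) := by
      rw [h1]
      exact_mod_cast congrArg (Nat.cast : ℕ → ℝ) h2
    rw [Nat.cast_sum] at hcast
    rw [Nat.cast_sum] at hcast
    rw [pow_two]
    linarith
  rw [Real.norm_eq_abs, Real.norm_eq_abs, abs_of_nonneg (Real.sqrt_nonneg _), hD]
  exact analytic N hN
end

section
/- Let N be a positive integer and, for each positive divisor K of N, define the OTFS precoding matrix M(K) ∈ ℂ^{N×N} by M(K)_{i,j} = (1/√(N/K))·exp(2πi·⌊i/K⌋·⌊j/K⌋·K/N) if i mod K = j mod K, and M(K)_{i,j} = 0 otherwise (this is the matrix F_{N/K}ᴴ ⊗ I_K under the index identification n = K·l + k). Then for positive divisors K and K' of N, the product M(K')ᴴ · M(K) equals the N×N identity matrix if and only if K' = K. In particular, the OTFS delay–Doppler grid size that correctly inverts the precoding is unique. -/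
open Matrix

/-- The OTFS precoding factor `M(K) = F_{N/K}ᴴ ⊗ I_K` (under the index identification
`n = K·l + k`): `M(K)_{i,j} = (1/√(N/K))·exp(2πi·⌊i/K⌋·⌊j/K⌋·K/N)` if `i ≡ j (mod K)`,
and `0` otherwise. -/
noncomputable def otfsM (N K : ℕ) : Matrix (Fin N) (Fin N) ℂ :=
  fun i j =>
    if (i : ℕ) % K = (j : ℕ) % K then
      ((1 / Real.sqrt ((N / K : ℕ)) : ℝ) : ℂ) *
        Complex.exp (2 * (Real.pi : ℂ) * Complex.I *
          (((i : ℕ) / K : ℕ) : ℂ) * (((j : ℕ) / K : ℕ) : ℂ) * (K : ℂ) / (N : ℂ))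
    else 0

open Finset in
lemma otfs_sum_exp (L : ℕ) (hL : 0 < L) (d : ℤ) :
    ∑ q : Fin L, Complex.exp (2 * (Real.pi : ℂ) * Complex.I * ((d : ℂ) / (L : ℂ)) * (q : ℂ)) =
      if (L : ℤ) ∣ d then (L : ℂ) else 0 := by
  have hLC : (L : ℂ) ≠ 0 := Nat.cast_ne_zero.mpr hL.ne'
  set z : ℂ := Complex.exp (2 * (Real.pi : ℂ) * Complex.I * ((d : ℂ) / (L : ℂ))) with hz
  have hterm : ∀ q : Fin L,
      Complex.exp (2 * (Real.pi : ℂ) * Complex.I * ((d : ℂ) / (L : ℂ)) * (q : ℂ)) = z ^ (q : ℕ) := by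
    intro q
    rw [hz, ← Complex.exp_nat_mul]
    ring_nf
  rw [Finset.sum_congr rfl (fun q _ => hterm q), Fin.sum_univ_eq_sum_range]
  by_cases hd : (L : ℤ) ∣ d
  · obtain ⟨m, hm⟩ := hd
    have hz1 : z = 1 := by
      rw [hz, hm]
      push_cast
      rw [show 2 * (Real.pi : ℂ) * Complex.I * ((L : ℂ) * (m : ℂ) / (L : ℂ)) =
          (m : ℂ) * (2 * (Real.pi : ℂ) * Complex.I) by field_simp]
      exact Complex.exp_int_mul_two_pi_mul_I m
    simp only [hz1, one_pow, Finset.sum_const, Finset.card_range, nsmul_eq_mul, mul_one]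
    rw [if_pos ⟨m, hm⟩]
  · have hzL : z ^ L = 1 := by
      rw [hz, ← Complex.exp_nat_mul]
      rw [show (L : ℂ) * (2 * (Real.pi : ℂ) * Complex.I * ((d : ℂ) / (L : ℂ))) =
          (d : ℂ) * (2 * (Real.pi : ℂ) * Complex.I) by field_simp]
      exact Complex.exp_int_mul_two_pi_mul_I d
    have hzne : z ≠ 1 := by
      intro h
      rw [hz, Complex.exp_eq_one_iff] at h
      obtain ⟨n, hn⟩ := h
      apply hd
      have h2 : (2 * (Real.pi : ℂ) * Complex.I) ≠ 0 := by
        simp [Real.pi_ne_zero, Complex.I_ne_zero]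
      have hdc : (d : ℂ) = (L : ℂ) * (n : ℂ) := by
        have : 2 * (Real.pi : ℂ) * Complex.I * (d : ℂ) =
            2 * (Real.pi : ℂ) * Complex.I * ((L : ℂ) * (n : ℂ)) := by
          field_simp at hn
          linear_combination (2 * (Real.pi : ℂ) * Complex.I) * hn
        exact mul_left_cancel₀ h2 this
      exact ⟨n, by exact_mod_cast hdc⟩
    rw [geom_sum_eq hzne, hzL, if_neg hd]
    simp


lemma otfsM_unitary (N K : ℕ) (hN : 0 < N) (hK : 0 < K) (hKd : K ∣ N) :
    (otfsM N K)ᴴ * otfsM N K = 1 := by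
  set L := N / K with hLdef
  have hL : 0 < L := Nat.div_pos (Nat.le_of_dvd hN hKd) hK
  have hKL : K * L = N := Nat.mul_div_cancel' hKd
  have hLK : L * K = N := by rw [mul_comm]; exact hKL
  have hKC : (K : ℂ) ≠ 0 := Nat.cast_ne_zero.mpr hK.ne'
  have hLC : (L : ℂ) ≠ 0 := Nat.cast_ne_zero.mpr hL.ne'
  have hNC : (N : ℂ) ≠ 0 := Nat.cast_ne_zero.mpr hN.ne'
  ext j l
  rw [Matrix.mul_apply]
  simp only [conjTranspose_apply]
  by_cases hjl : (j : ℕ) % K = (l : ℕ) % K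
  · -- reindex the sum over i by (q, r) ↦ r + K * q
    have key : ∀ i : Fin N,
        star (otfsM N K i j) * otfsM N K i l =
        if (i : ℕ) % K = (j : ℕ) % K then
          (((1 / Real.sqrt L : ℝ) : ℂ) * ((1 / Real.sqrt L : ℝ) : ℂ)) *
            Complex.exp (2 * (Real.pi : ℂ) * Complex.I *
              ((((((l : ℕ) / K : ℕ) : ℤ) - (((j : ℕ) / K : ℕ) : ℤ) : ℤ) : ℂ) / (L : ℂ)) *
              ((((i : ℕ) / K : ℕ) : ℂ)))
        else 0 := by
      intro i
      by_cases hij : (i : ℕ) % K = (j : ℕ) % K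
      · have hil : (i : ℕ) % K = (l : ℕ) % K := hij.trans hjl
        rw [if_pos hij]
        unfold otfsM
        rw [if_pos hij, if_pos hil, ← hLdef]
        rw [star_mul']
        rw [show star (((1 / Real.sqrt L : ℝ) : ℂ)) = ((1 / Real.sqrt L : ℝ) : ℂ) from
          Complex.conj_ofReal _]
        have hstar : star (Complex.exp (2 * (Real.pi : ℂ) * Complex.I *
            (((i : ℕ) / K : ℕ) : ℂ) * (((j : ℕ) / K : ℕ) : ℂ) * (K : ℂ) / (N : ℂ))) =
            Complex.exp (-(2 * (Real.pi : ℂ) * Complex.I *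
            (((i : ℕ) / K : ℕ) : ℂ) * (((j : ℕ) / K : ℕ) : ℂ) * (K : ℂ) / (N : ℂ))) := by
          rw [Complex.star_def, ← Complex.exp_conj]
          congr 1
          simp only [map_div₀, _root_.map_mul, Complex.conj_I, Complex.conj_ofReal,
            Complex.conj_natCast, Complex.conj_ofNat]
          ring
        rw [hstar]
        rw [show ((1 / Real.sqrt L : ℝ) : ℂ) * Complex.exp _ *
            (((1 / Real.sqrt L : ℝ) : ℂ) * Complex.exp _) =
            (((1 / Real.sqrt L : ℝ) : ℂ) * ((1 / Real.sqrt L : ℝ) : ℂ)) *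
            (Complex.exp (-(2 * (Real.pi : ℂ) * Complex.I *
            (((i : ℕ) / K : ℕ) : ℂ) * (((j : ℕ) / K : ℕ) : ℂ) * (K : ℂ) / (N : ℂ))) *
            Complex.exp (2 * (Real.pi : ℂ) * Complex.I *
            (((i : ℕ) / K : ℕ) : ℂ) * (((l : ℕ) / K : ℕ) : ℂ) * (K : ℂ) / (N : ℂ))) by ring]
        rw [← Complex.exp_add]
        have hKN : (N : ℂ) = (K : ℂ) * (L : ℂ) := by exact_mod_cast hKL.symm
        have hexp : -(2 * (Real.pi : ℂ) * Complex.I *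
            (((i : ℕ) / K : ℕ) : ℂ) * (((j : ℕ) / K : ℕ) : ℂ) * (K : ℂ) / (N : ℂ)) +
            2 * (Real.pi : ℂ) * Complex.I *
            (((i : ℕ) / K : ℕ) : ℂ) * (((l : ℕ) / K : ℕ) : ℂ) * (K : ℂ) / (N : ℂ) =
            2 * (Real.pi : ℂ) * Complex.I *
              ((((((l : ℕ) / K : ℕ) : ℤ) - (((j : ℕ) / K : ℕ) : ℤ) : ℤ) : ℂ) / (L : ℂ)) *
              ((((i : ℕ) / K : ℕ) : ℂ)) := by
          simp only [Int.cast_sub, Int.cast_natCast]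
          rw [hKN]
          field_simp
          ring
        rw [hexp]
      · rw [if_neg hij]
        unfold otfsM
        rw [if_neg hij, star_zero, zero_mul]
    rw [Finset.sum_congr rfl (fun i _ => key i)]
    set C : ℂ := ((1 / Real.sqrt L : ℝ) : ℂ) * ((1 / Real.sqrt L : ℝ) : ℂ) with hC
    set d : ℤ := (((l : ℕ) / K : ℕ) : ℤ) - (((j : ℕ) / K : ℕ) : ℤ) with hd
    set e : Fin L × Fin K ≃ Fin N := finProdFinEquiv.trans (finCongr hLK) with he
    rw [← Equiv.sum_comp e (fun i : Fin N => if (i : ℕ) % K = (j : ℕ) % K then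
      C * Complex.exp (2 * (Real.pi : ℂ) * Complex.I * ((d : ℂ) / (L : ℂ)) *
        ((((i : ℕ) / K : ℕ) : ℂ))) else 0)]
    rw [Fintype.sum_prod_type]
    have hval : ∀ (q : Fin L) (r : Fin K), ((e (q, r) : Fin N) : ℕ) = (r : ℕ) + K * (q : ℕ) := by
      intro q r
      simp [he, finCongr_apply]
    set r0 : Fin K := ⟨(j : ℕ) % K, Nat.mod_lt _ hK⟩ with hr0
    have hinner : ∀ q : Fin L,
        (∑ r : Fin K, if ((e (q, r) : Fin N) : ℕ) % K = (j : ℕ) % K then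
          C * Complex.exp (2 * (Real.pi : ℂ) * Complex.I * ((d : ℂ) / (L : ℂ)) *
            ((((((e (q, r) : Fin N) : ℕ) / K : ℕ) : ℂ)))) else 0) =
        C * Complex.exp (2 * (Real.pi : ℂ) * Complex.I * ((d : ℂ) / (L : ℂ)) * ((q : ℕ) : ℂ)) := by
      intro q
      have hmod : ∀ r : Fin K, ((e (q, r) : Fin N) : ℕ) % K = (r : ℕ) := by
        intro r
        rw [hval q r, Nat.add_mul_mod_self_left, Nat.mod_eq_of_lt r.isLt]
      have hdiv : ∀ r : Fin K, ((e (q, r) : Fin N) : ℕ) / K = (q : ℕ) := by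
        intro r
        rw [hval q r, Nat.add_mul_div_left _ _ hK, Nat.div_eq_of_lt r.isLt, Nat.zero_add]
      have step : ∀ r : Fin K,
          (if ((e (q, r) : Fin N) : ℕ) % K = (j : ℕ) % K then
            C * Complex.exp (2 * (Real.pi : ℂ) * Complex.I * ((d : ℂ) / (L : ℂ)) *
              ((((((e (q, r) : Fin N) : ℕ) / K : ℕ) : ℂ)))) else 0) =
          (if r = r0 then
            C * Complex.exp (2 * (Real.pi : ℂ) * Complex.I * ((d : ℂ) / (L : ℂ)) *
              ((q : ℕ) : ℂ)) else 0) := by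
        intro r
        rw [hmod r, hdiv r]
        congr 1
        simp [hr0, Fin.ext_iff]
      rw [Finset.sum_congr rfl (fun r _ => step r)]
      rw [Finset.sum_ite_eq' Finset.univ r0]
      simp
    rw [Finset.sum_congr rfl (fun q _ => hinner q), ← Finset.mul_sum]
    rw [otfs_sum_exp L hL d]
    by_cases hq : (j : ℕ) / K = (l : ℕ) / K
    · have hjleq : j = l := by
        have h1 := Nat.div_add_mod (j : ℕ) K
        have h2 := Nat.div_add_mod (l : ℕ) K
        rw [hq, hjl] at h1
        exact Fin.ext (by omega)
      have hd0 : d = 0 := by rw [hd, hq]; ring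
      rw [hd0, if_pos (dvd_zero _), hjleq, Matrix.one_apply_eq]
      rw [hC, ← Complex.ofReal_mul]
      have : (1 / Real.sqrt L) * (1 / Real.sqrt L) = 1 / L := by
        rw [div_mul_div_comm, one_mul, Real.mul_self_sqrt (Nat.cast_nonneg L)]
      rw [this]
      push_cast
      field_simp
    · have hjlne : j ≠ l := by
        intro h; exact hq (by rw [h])
      have hdne : d ≠ 0 := by
        rw [hd]
        intro h
        exact hq (by omega)
      have hnd : ¬ ((L : ℤ) ∣ d) := by
        intro hdvd
        have h1 : (j : ℕ) / K < L := by
          apply Nat.div_lt_of_lt_mul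
          first
          | (rw [hKL]; exact j.isLt)
          | (rw [hLK]; exact j.isLt)
        have h2 : (l : ℕ) / K < L := by
          apply Nat.div_lt_of_lt_mul
          first
          | (rw [hKL]; exact l.isLt)
          | (rw [hLK]; exact l.isLt)
        apply hdne
        apply Int.eq_zero_of_abs_lt_dvd hdvd
        have h1' : ((((j : ℕ) / K : ℕ)) : ℤ) < (L : ℤ) := by exact_mod_cast h1
        have h2' : ((((l : ℕ) / K : ℕ)) : ℤ) < (L : ℤ) := by exact_mod_cast h2
        have h3 : (0:ℤ) ≤ (((j : ℕ) / K : ℕ) : ℤ) := Int.natCast_nonneg _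
        have h4 : (0:ℤ) ≤ (((l : ℕ) / K : ℕ) : ℤ) := Int.natCast_nonneg _
        rw [hd, abs_lt]
        constructor <;> linarith
      rw [if_neg hnd, mul_zero, Matrix.one_apply_ne hjlne]
  · have key0 : ∀ i : Fin N, star (otfsM N K i j) * otfsM N K i l = 0 := by
      intro i
      unfold otfsM
      by_cases hij : (i : ℕ) % K = (j : ℕ) % K
      · rw [if_neg (fun h => hjl (hij.symm.trans h))]
        rw [mul_zero]
      · rw [if_neg hij, star_zero, zero_mul]
    rw [Finset.sum_congr rfl (fun i _ => key0 i), Finset.sum_const_zero]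
    have : j ≠ l := fun h => hjl (h ▸ rfl)
    simp [Matrix.one_apply, this]


/-- Uniqueness of the OTFS delay–Doppler grid size: for positive divisors `K, K'` of `N`,
the candidate decoding matrix `M(K')ᴴ` inverts the precoding `M(K)` (i.e.
`M(K')ᴴ · M(K) = I_N`) if and only if `K' = K`. -/
theorem otfs_grid_size_unique (N K K' : ℕ) (hN : 0 < N)
    (hK : 0 < K) (hK' : 0 < K') (hKd : K ∣ N) (hK'd : K' ∣ N) :
    (otfsM N K')ᴴ * otfsM N K = 1 ↔ K' = K := by
  constructor
  · intro h
    have hU : (otfsM N K)ᴴ * otfsM N K = 1 := otfsM_unitary N K hN hK hKd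
    have hU' : (otfsM N K')ᴴ * otfsM N K' = 1 := otfsM_unitary N K' hN hK' hK'd
    have hMMH : otfsM N K * (otfsM N K)ᴴ = 1 := mul_eq_one_comm.mp hU
    have hEq : otfsM N K' = otfsM N K := by
      have h1 : (otfsM N K')ᴴ = (otfsM N K)ᴴ := by
        calc (otfsM N K')ᴴ = (otfsM N K')ᴴ * (otfsM N K * (otfsM N K)ᴴ) := by
              rw [hMMH, mul_one]
          _ = ((otfsM N K')ᴴ * otfsM N K) * (otfsM N K)ᴴ := by rw [mul_assoc]
          _ = (otfsM N K)ᴴ := by rw [h, one_mul]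
      have := congrArg Matrix.conjTranspose h1
      simpa using this
    by_contra hne
    rcases Nat.lt_or_ge K' K with hlt | hge
    · -- K' < K ≤ N, use index K'
      have hKN : K' < N := lt_of_lt_of_le hlt (Nat.le_of_dvd hN hKd)
      have h0 : ((⟨0, hN⟩ : Fin N) : ℕ) = 0 := rfl
      have hz := congrFun (congrFun hEq (⟨0, hN⟩ : Fin N)) (⟨K', hKN⟩ : Fin N)
      unfold otfsM at hz
      rw [if_pos (by simp [Nat.mod_self]), if_neg (by
        simp only [h0]
        rw [Nat.zero_mod, Nat.mod_eq_of_lt hlt]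
        omega)] at hz
      have hL'pos : 0 < N / K' := Nat.div_pos (Nat.le_of_dvd hN hK'd) hK'
      exact absurd hz (by
        apply mul_ne_zero
        · simp only [ne_eq, Complex.ofReal_eq_zero]
          have : (0:ℝ) < Real.sqrt ((N / K' : ℕ)) := Real.sqrt_pos.mpr (by exact_mod_cast hL'pos)
          positivity
        · exact Complex.exp_ne_zero _)
    · have hlt : K < K' := lt_of_le_of_ne hge (fun hh => hne hh.symm)
      have hKN : K < N := lt_of_lt_of_le hlt (Nat.le_of_dvd hN hK'd)
      have h0 : ((⟨0, hN⟩ : Fin N) : ℕ) = 0 := rfl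
      have hz := congrFun (congrFun hEq (⟨0, hN⟩ : Fin N)) (⟨K, hKN⟩ : Fin N)
      unfold otfsM at hz
      rw [if_neg (by
        simp only [h0]
        rw [Nat.zero_mod, Nat.mod_eq_of_lt hlt]
        omega), if_pos (by simp [Nat.mod_self])] at hz
      have hLpos : 0 < N / K := Nat.div_pos (Nat.le_of_dvd hN hKd) hK
      exact absurd hz.symm (by
        apply mul_ne_zero
        · simp only [ne_eq, Complex.ofReal_eq_zero]
          have : (0:ℝ) < Real.sqrt ((N / K : ℕ)) := Real.sqrt_pos.mpr (by exact_mod_cast hLpos)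
          positivity
        · exact Complex.exp_ne_zero _)
  · intro h
    rw [h]
    exact otfsM_unitary N K hN hK hKd
end

section
/- Let N ≥ 2 be an integer, c₁, c₂, c₁', c₂' real numbers, ε ≥ 0, and suppose |c₁ − c₁'| ≤ ε / (2π(N−1)²). Let d ∈ ℂᴺ and define x_n = (1/√N)·∑_{m=0}^{N−1} d_m · exp(2πi(c₁ n² + c₂ m² + m n / N)) and d̂_k = (1/√N)·∑_{n=0}^{N−1} x_n · exp(−2πi(c₁' n² + c₂' k² + k n / N)). Then for every k = 0, …, N−1, |d̂_k − exp(2πi(c₂ − c₂')·k²)·d_k| ≤ ε · ∑_{m=0}^{N−1} |d_m|. -/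
open Complex Finset
section Helpers

lemma aux_abs_exp_I_sub_one (θ : ℝ) : Norm.norm (Complex.exp (θ * I) - 1) ≤ |θ| := by
  have key : Complex.exp ((θ:ℂ) * I) - 1 =
      Complex.exp (((θ/2 : ℝ) : ℂ) * I) * (2 * Complex.sin ((θ/2 : ℝ) : ℂ) * I) := by
    rw [Complex.sin]
    rw [show (-(((θ/2:ℝ):ℂ)) * I) = -(((θ/2:ℝ):ℂ) * I) by ring]
    rw [Complex.exp_neg]
    have h2 : Complex.exp (((θ/2:ℝ):ℂ) * I) ≠ 0 := Complex.exp_ne_zero _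
    field_simp
    rw [Complex.I_sq, sq, ← Complex.exp_add]
    have hθ : I * ((θ/2:ℝ):ℂ) + I * ((θ/2:ℝ):ℂ) = (θ:ℂ) * I := by push_cast; ring
    rw [hθ]
    ring
  rw [key]
  rw [norm_mul, norm_mul, norm_mul, Complex.norm_exp_ofReal_mul_I, Complex.norm_I,
    ← Complex.ofReal_sin, Complex.norm_two, Complex.norm_real, Real.norm_eq_abs]
  have h1 := Real.abs_sin_le_abs (x := θ/2)
  have : |θ/2| = |θ|/2 := by rw [abs_div]; norm_num
  nlinarith [abs_nonneg (Real.sin (θ/2))]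

noncomputable def ee (r : ℝ) : ℂ := Complex.exp (((2 * Real.pi * r : ℝ) : ℂ) * Complex.I)

lemma ee_abs (r : ℝ) : Norm.norm (ee r) = 1 := Complex.norm_exp_ofReal_mul_I _

lemma ee_add (r s : ℝ) : ee (r + s) = ee r * ee s := by
  rw [ee, ee, ee, ← Complex.exp_add]; congr 1; push_cast; ring

lemma ee_zero : ee 0 = 1 := by simp [ee]

lemma ee_orth (N : ℕ) (hN : 0 < N) (m k : Fin N) :
    ∑ n : Fin N, ee ((((m:ℕ):ℝ) - ((k:ℕ):ℝ)) * ((n:ℕ):ℝ) / N) =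
      if m = k then (N : ℂ) else 0 := by
  have hNR : ((N:ℝ)) ≠ 0 := Nat.cast_ne_zero.mpr hN.ne'
  by_cases h : m = k
  · simp [h, ee_zero]
  · simp only [if_neg h]
    set r : ℝ := (((m:ℕ):ℝ) - ((k:ℕ):ℝ)) / N with hr
    have hpow : ∀ n : ℕ, ee (r * n) = (ee r) ^ n := by
      intro n
      rw [ee, ee, ← Complex.exp_nat_mul]
      congr 1; push_cast; ring
    have hterm : ∀ n : Fin N, ee ((((m:ℕ):ℝ) - ((k:ℕ):ℝ)) * ((n:ℕ):ℝ) / N) = (ee r) ^ (n:ℕ) := by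
      intro n; rw [← hpow]; congr 1; rw [hr]; ring
    rw [Finset.sum_congr rfl (fun n _ => hterm n), Fin.sum_univ_eq_sum_range (fun i => (ee r)^i)]
    have hzN : (ee r) ^ N = 1 := by
      rw [← hpow]  -- ee (r*N)
      have : r * N = (((m:ℕ):ℝ) - ((k:ℕ):ℝ)) := by rw [hr]; field_simp
      rw [this, ee]
      have : (((2 * Real.pi * (((m:ℕ):ℝ) - ((k:ℕ):ℝ)) : ℝ)) : ℂ) * Complex.I
          = (((m:ℕ):ℤ) - ((k:ℕ):ℤ) : ℤ) * (2 * Real.pi * Complex.I) := by push_cast; ring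
      rw [this, Complex.exp_int_mul_two_pi_mul_I]
    have hz1 : (ee r) ≠ 1 := by
      intro hone
      rw [ee, Complex.exp_eq_one_iff] at hone
      obtain ⟨t, ht⟩ := hone
      have ht' : ((2 * Real.pi * r : ℝ) : ℂ) = (((t : ℝ) * (2 * Real.pi) : ℝ) : ℂ) := by
        have hI : (Complex.I) ≠ 0 := Complex.I_ne_zero
        have ht'' : ((2 * Real.pi * r : ℝ) : ℂ) * Complex.I
            = (((t : ℝ) * (2 * Real.pi) : ℝ) : ℂ) * Complex.I := by
          push_cast at ht ⊢; linear_combination ht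
        exact mul_right_cancel₀ hI ht''
      have hreq : 2 * Real.pi * r = (t : ℝ) * (2 * Real.pi) := by exact_mod_cast ht'
      have hπ : (Real.pi) ≠ 0 := Real.pi_ne_zero
      have hrt : r = (t : ℝ) := by
        have h2π : (2 * Real.pi) ≠ 0 := by positivity
        apply mul_left_cancel₀ h2π
        linarith
      -- r = (m - k)/N = t, so m - k = t*N
      have hmk : (((m:ℕ):ℝ) - ((k:ℕ):ℝ)) = (t:ℝ) * N := by
        rw [hr] at hrt; field_simp at hrt; linarith
      have hb1 : (((m:ℕ):ℝ) - ((k:ℕ):ℝ)) < N := by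
        have : ((m:ℕ):ℝ) < N := by exact_mod_cast m.isLt
        have : (0:ℝ) ≤ ((k:ℕ):ℝ) := by positivity
        linarith
      have hb2 : -(N:ℝ) < (((m:ℕ):ℝ) - ((k:ℕ):ℝ)) := by
        have : ((k:ℕ):ℝ) < N := by exact_mod_cast k.isLt
        have : (0:ℝ) ≤ ((m:ℕ):ℝ) := by positivity
        linarith
      have hNpos : (0:ℝ) < N := by exact_mod_cast hN
      have ht0 : t = 0 := by
        rcases lt_trichotomy t 0 with h1 | h1 | h1
        · have : (t:ℝ) ≤ -1 := by exact_mod_cast Int.le_of_lt_add_one (by omega : t < -1 + 1)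
          nlinarith
        · exact h1
        · have : (1:ℝ) ≤ (t:ℝ) := by exact_mod_cast h1
          nlinarith
      rw [ht0] at hmk
      simp at hmk
      have : (m:ℕ) = (k:ℕ) := by exact_mod_cast sub_eq_zero.mp (by linarith : ((m:ℕ):ℝ) - ((k:ℕ):ℝ) = 0)
      exact h (Fin.ext this)
    rw [geom_sum_eq hz1, hzN]
    simp

end Helpers

/-- Quantitative AFDM brute-force demodulation error (Theorem 1, acceptable-error step):
if the chirp mismatch satisfies `|c₁ − c₁'| ≤ ε / (2π(N−1)²)`, then each demodulated
sample `d̂_k = (1/√N)·∑_n x_n · exp(−2πi(c₁' n² + c₂' k² + k n / N))`, where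
`x_n = (1/√N)·∑_m d_m · exp(2πi(c₁ n² + c₂ m² + m n / N))`, satisfies
`|d̂_k − exp(2πi(c₂ − c₂')k²)·d_k| ≤ ε · ∑_m |d_m|`. -/
theorem afdm_demodulation_error_bound (N : ℕ) (hN : 2 ≤ N)
    (c₁ c₂ c₁' c₂' : ℝ) (ε : ℝ) (hε : 0 ≤ ε)
    (hmis : |c₁ - c₁'| ≤ ε / (2 * Real.pi * ((N : ℝ) - 1) ^ 2))
    (d : Fin N → ℂ) (x : Fin N → ℂ)
    (hx : ∀ n : Fin N, x n =
      ((1 / Real.sqrt N : ℝ) : ℂ) *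
        ∑ m : Fin N, d m *
          Complex.exp (2 * (Real.pi : ℂ) * Complex.I *
            ((c₁ : ℂ) * ((n : ℕ) : ℂ) ^ 2 + (c₂ : ℂ) * ((m : ℕ) : ℂ) ^ 2 +
              ((m : ℕ) : ℂ) * ((n : ℕ) : ℂ) / (N : ℂ))))
    (k : Fin N) :
    Norm.norm
        (((1 / Real.sqrt N : ℝ) : ℂ) *
            (∑ n : Fin N, x n *
              Complex.exp (-(2 * (Real.pi : ℂ) * Complex.I *
                ((c₁' : ℂ) * ((n : ℕ) : ℂ) ^ 2 + (c₂' : ℂ) * ((k : ℕ) : ℂ) ^ 2 +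
                  ((k : ℕ) : ℂ) * ((n : ℕ) : ℂ) / (N : ℂ))))) -
          Complex.exp (2 * (Real.pi : ℂ) * Complex.I *
            ((c₂ - c₂' : ℝ) : ℂ) * ((k : ℕ) : ℂ) ^ 2) * d k)
      ≤ ε * ∑ m : Fin N, Norm.norm (d m) := by
  have hN0 : 0 < N := by omega
  have hNR : (0:ℝ) < (N:ℝ) := by exact_mod_cast hN0
  have hNC : ((N:ℂ)) ≠ 0 := Nat.cast_ne_zero.mpr hN0.ne'
  set Δ : ℝ := c₁ - c₁' with hΔ
  -- real exponent pieces
  set r : Fin N → Fin N → ℝ := fun n m => (((m:ℕ):ℝ) - ((k:ℕ):ℝ)) * ((n:ℕ):ℝ) / N with hrdef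
  set s : Fin N → ℝ := fun m => c₂ * ((m:ℕ):ℝ)^2 - c₂' * ((k:ℕ):ℝ)^2 with hsdef
  set F : Fin N → Fin N → ℂ :=
    fun n m => d m * ee (Δ * ((n:ℕ):ℝ)^2 + (s m + r n m)) with hFdef
  set G : Fin N → Fin N → ℂ := fun n m => d m * ee (s m + r n m) with hGdef
  have hcc : ((1 / Real.sqrt N : ℝ) : ℂ) * ((1 / Real.sqrt N : ℝ) : ℂ) = 1 / (N:ℂ) := by
    rw [← Complex.ofReal_mul]
    have : (1 / Real.sqrt N) * (1 / Real.sqrt N) = 1 / (N:ℝ) := by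
      rw [div_mul_div_comm, one_mul, Real.mul_self_sqrt hNR.le]
    rw [this]; push_cast; ring
  -- Claim A
  have hA : ((1 / Real.sqrt N : ℝ) : ℂ) *
            (∑ n : Fin N, x n *
              Complex.exp (-(2 * (Real.pi : ℂ) * Complex.I *
                ((c₁' : ℂ) * ((n : ℕ) : ℂ) ^ 2 + (c₂' : ℂ) * ((k : ℕ) : ℂ) ^ 2 +
                  ((k : ℕ) : ℂ) * ((n : ℕ) : ℂ) / (N : ℂ)))))
      = (1 / (N:ℂ)) * ∑ n : Fin N, ∑ m : Fin N, F n m := by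
    simp only [hx, Finset.mul_sum, Finset.sum_mul]
    apply Finset.sum_congr rfl
    intro n _
    apply Finset.sum_congr rfl
    intro m _
    have h1 : Complex.exp (2 * (Real.pi : ℂ) * Complex.I *
            ((c₁ : ℂ) * ((n : ℕ) : ℂ) ^ 2 + (c₂ : ℂ) * ((m : ℕ) : ℂ) ^ 2 +
              ((m : ℕ) : ℂ) * ((n : ℕ) : ℂ) / (N : ℂ))) *
          Complex.exp (-(2 * (Real.pi : ℂ) * Complex.I *
            ((c₁' : ℂ) * ((n : ℕ) : ℂ) ^ 2 + (c₂' : ℂ) * ((k : ℕ) : ℂ) ^ 2 +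
              ((k : ℕ) : ℂ) * ((n : ℕ) : ℂ) / (N : ℂ))))
        = ee (Δ * ((n:ℕ):ℝ)^2 + (s m + r n m)) := by
      rw [← Complex.exp_add, ee]
      congr 1
      simp only [hΔ, hsdef, hrdef]
      push_cast
      ring
    simp only [hFdef]
    rw [← h1]
    linear_combination (d m * (Complex.exp (2 * (Real.pi : ℂ) * Complex.I *
            ((c₁ : ℂ) * ((n : ℕ) : ℂ) ^ 2 + (c₂ : ℂ) * ((m : ℕ) : ℂ) ^ 2 +
              ((m : ℕ) : ℂ) * ((n : ℕ) : ℂ) / (N : ℂ))) *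
          Complex.exp (-(2 * (Real.pi : ℂ) * Complex.I *
            ((c₁' : ℂ) * ((n : ℕ) : ℂ) ^ 2 + (c₂' : ℂ) * ((k : ℕ) : ℂ) ^ 2 +
              ((k : ℕ) : ℂ) * ((n : ℕ) : ℂ) / (N : ℂ)))))) * hcc
  -- Claim B
  have hB : Complex.exp (2 * (Real.pi : ℂ) * Complex.I *
            ((c₂ - c₂' : ℝ) : ℂ) * ((k : ℕ) : ℂ) ^ 2) * d k
      = (1 / (N:ℂ)) * ∑ n : Fin N, ∑ m : Fin N, G n m := by
    rw [Finset.sum_comm]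
    have hinner : ∀ m : Fin N, (∑ n : Fin N, G n m)
        = d m * ee (s m) * (if m = k then (N:ℂ) else 0) := by
      intro m
      have : ∀ n : Fin N, G n m = (d m * ee (s m)) * ee (r n m) := by
        intro n; simp only [hGdef, ee_add]; ring
      rw [Finset.sum_congr rfl (fun n _ => this n), ← Finset.mul_sum]
      rw [hrdef]
      rw [ee_orth N hN0 m k]
    rw [Finset.sum_congr rfl (fun m _ => hinner m)]
    simp only [mul_ite, mul_zero, Finset.sum_ite_eq', Finset.mem_univ, if_true]
    have hek : ee (s k) = Complex.exp (2 * (Real.pi : ℂ) * Complex.I *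
            ((c₂ - c₂' : ℝ) : ℂ) * ((k : ℕ) : ℂ) ^ 2) := by
      rw [ee]; congr 1; simp only [hsdef]; push_cast; ring
    rw [hek]
    field_simp
  rw [hA, hB, ← mul_sub, ← Finset.sum_sub_distrib]
  simp only [← Finset.sum_sub_distrib]
  -- bound
  have hper : ∀ (n m : Fin N), Norm.norm (F n m - G n m) ≤ ε * Norm.norm (d m) := by
    intro n m
    have hsplit : F n m - G n m = d m * ee (s m + r n m) * (ee (Δ * ((n:ℕ):ℝ)^2) - 1) := by
      simp only [hFdef, hGdef, ee_add]; ring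
    rw [hsplit]
    rw [norm_mul, norm_mul, ee_abs, mul_one]
    have hb : Norm.norm (ee (Δ * ((n:ℕ):ℝ)^2) - 1) ≤ ε := by
      rw [ee]
      refine le_trans (aux_abs_exp_I_sub_one _) ?_
      have habs : |2 * Real.pi * (Δ * ((n:ℕ):ℝ)^2)| = 2 * Real.pi * (|Δ| * ((n:ℕ):ℝ)^2) := by
        rw [abs_mul, abs_mul, abs_mul, _root_.abs_two, _root_.abs_of_nonneg Real.pi_pos.le,
          _root_.abs_of_nonneg (by positivity : (0:ℝ) ≤ ((n:ℕ):ℝ)^2)]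
      rw [habs]
      have hn : ((n:ℕ):ℝ) ≤ (N:ℝ) - 1 := by
        have h1 : ((n:ℕ)+1:ℝ) ≤ (N:ℝ) := by exact_mod_cast n.isLt
        linarith
      have hn2 : ((n:ℕ):ℝ)^2 ≤ ((N:ℝ)-1)^2 := by
        have h0 : (0:ℝ) ≤ ((n:ℕ):ℝ) := by positivity
        nlinarith
      have hN1 : (0:ℝ) < (N:ℝ) - 1 := by
        have : (2:ℝ) ≤ (N:ℝ) := by exact_mod_cast hN
        linarith
      have hD : (0:ℝ) < 2 * Real.pi * ((N:ℝ)-1)^2 :=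
        mul_pos (by positivity) (pow_pos hN1 2)
      have hmis' : |Δ| * (2 * Real.pi * ((N:ℝ)-1)^2) ≤ ε := by
        rw [← le_div_iff₀ hD]; exact hmis
      calc 2 * Real.pi * (|Δ| * ((n:ℕ):ℝ)^2)
          ≤ 2 * Real.pi * (|Δ| * ((N:ℝ)-1)^2) := by
            apply mul_le_mul_of_nonneg_left _ (by positivity)
            exact mul_le_mul_of_nonneg_left hn2 (abs_nonneg Δ)
        _ = |Δ| * (2 * Real.pi * ((N:ℝ)-1)^2) := by ring
        _ ≤ ε := hmis'
    calc Norm.norm (d m) * Norm.norm (ee (Δ * ((n:ℕ):ℝ)^2) - 1)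
        ≤ Norm.norm (d m) * ε := by
          exact mul_le_mul_of_nonneg_left hb (norm_nonneg _)
      _ = ε * Norm.norm (d m) := mul_comm _ _
  calc Norm.norm ((1/(N:ℂ)) * ∑ n : Fin N, ∑ m : Fin N, (F n m - G n m))
      = (1/(N:ℝ)) * Norm.norm (∑ n : Fin N, ∑ m : Fin N, (F n m - G n m)) := by
        rw [norm_mul]
        congr 1
        rw [norm_div, norm_one, Complex.norm_natCast]
    _ ≤ (1/(N:ℝ)) * ∑ n : Fin N, ∑ m : Fin N, Norm.norm (F n m - G n m) := by
        apply mul_le_mul_of_nonneg_left _ (by positivity)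
        refine le_trans (norm_sum_le _ _) ?_
        exact Finset.sum_le_sum fun n _ => norm_sum_le _ _
    _ ≤ (1/(N:ℝ)) * ∑ n : Fin N, ∑ m : Fin N, ε * Norm.norm (d m) := by
        apply mul_le_mul_of_nonneg_left _ (by positivity)
        exact Finset.sum_le_sum fun n _ => Finset.sum_le_sum fun m _ => hper n m
    _ = ε * ∑ m : Fin N, Norm.norm (d m) := by
        rw [Finset.sum_const, Finset.card_univ, Fintype.card_fin, nsmul_eq_mul, ← Finset.mul_sum]
        field_simp
end
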